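/- arXiv:1011.6169 — 7 statements merged into one kernel-verified Lean document; each statement's English description precedes it below -/
import Mathlib

section
/- In any anticommutative multiplicative Hom-algebra (A, ·, α), for all w, x, y, z in A: α²(w)·J_α(x,y,z) - α²(x)·J_α(y,z,w) + α²(y)·J_α(z,w,x) - α²(z)·J_α(w,x,y) = J_α(w·x, α(y), α(z)) + J_α(y·z, α(w), α(x)) + J_α(w·y, α(z), α(x)) + J_α(z·x, α(w), α(y)) - J_α(z·w, α(x), α(y)) - J_α(x·y, α(z), α(w)). -/
/-- The Hom-Jacobian of a Hom-algebra with bilinear multiplication `mul` and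
twisting map `α`: `J_α(x,y,z) = (x·y)·α(z) + (y·z)·α(x) + (z·x)·α(y)`. -/
def homJacobian {K : Type*} [Field K] {A : Type*} [AddCommGroup A] [Module K A]
    (mul : A →ₗ[K] A →ₗ[K] A) (α : A →ₗ[K] A) (x y z : A) : A :=
  mul (mul x y) (α z) + mul (mul y z) (α x) + mul (mul z x) (α y)

theorem homJacobian_four_variable_identity {K : Type*} [Field K] [CharZero K] {A : Type*} [AddCommGroup A] [Module K A]
    (mul : A →ₗ[K] A →ₗ[K] A) (α : A →ₗ[K] A)
    (anticomm : ∀ x y : A, mul x y = - mul y x)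
    (multiplicative : ∀ x y : A, α (mul x y) = mul (α x) (α y)) :
    ∀ w x y z : A,
      mul (α (α w)) (homJacobian mul α x y z)
        - mul (α (α x)) (homJacobian mul α y z w)
        + mul (α (α y)) (homJacobian mul α z w x)
        - mul (α (α z)) (homJacobian mul α w x y)
      = homJacobian mul α (mul w x) (α y) (α z)
        + homJacobian mul α (mul y z) (α w) (α x)
        + homJacobian mul α (mul w y) (α z) (α x)
        + homJacobian mul α (mul z x) (α w) (α y)
        - homJacobian mul α (mul z w) (α x) (α y)
        - homJacobian mul α (mul x y) (α z) (α w) := by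
  intro w x y z
  have htop : ∀ u v s : A, mul (α (α u)) (mul v s) = - mul (mul v s) (α (α u)) :=
    fun u v s => anticomm _ _
  have hin : ∀ u v s : A, mul (α u) (mul v s) = - mul (mul v s) (α u) :=
    fun u v s => anticomm _ _
  have hxw : mul x w = - mul w x := anticomm _ _
  have hyw : mul y w = - mul w y := anticomm _ _
  have hzw : mul z w = - mul w z := anticomm _ _
  have hyx : mul y x = - mul x y := anticomm _ _
  have hzx : mul z x = - mul x z := anticomm _ _
  have hzy : mul z y = - mul y z := anticomm _ _
  have haxw : mul (α x) (α w) = - mul (α w) (α x) := anticomm _ _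
  have hayw : mul (α y) (α w) = - mul (α w) (α y) := anticomm _ _
  have hazw : mul (α z) (α w) = - mul (α w) (α z) := anticomm _ _
  have hayx : mul (α y) (α x) = - mul (α x) (α y) := anticomm _ _
  have hazx : mul (α z) (α x) = - mul (α x) (α z) := anticomm _ _
  have hazy : mul (α z) (α y) = - mul (α y) (α z) := anticomm _ _
  have hS1 : mul (mul (α y) (α z)) (mul (α w) (α x))
      = - mul (mul (α w) (α x)) (mul (α y) (α z)) := anticomm _ _
  have hS2 : mul (mul (α x) (α z)) (mul (α w) (α y))
      = - mul (mul (α w) (α y)) (mul (α x) (α z)) := anticomm _ _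
  have hS3 : mul (mul (α x) (α y)) (mul (α w) (α z))
      = - mul (mul (α w) (α z)) (mul (α x) (α y)) := anticomm _ _
  simp only [homJacobian, multiplicative, map_add, map_neg, LinearMap.add_apply,
    LinearMap.neg_apply, htop, hin, hxw, hyw, hzw, hyx, hzx, hzy, haxw, hayw, hazw,
    hayx, hazx, hazy, hS1, hS2, hS3, neg_neg]
  abel
end

section
/- Let (A, ·, α) be a Hom-Malcev algebra. Then for all w, x, y, z in A: J_α(w·x, α(y), α(z)) + J_α(x·y, α(z), α(w)) + J_α(y·z, α(w), α(x)) + J_α(z·w, α(x), α(y)) = 0. -/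
section helpers
variable {K : Type*} [Field K] {A : Type*} [AddCommGroup A] [Module K A]
    (mul : A →ₗ[K] A →ₗ[K] A) (α : A →ₗ[K] A)

lemma Jcyc (x y z : A) : homJacobian mul α x y z = homJacobian mul α y z x := by
  simp only [homJacobian]; abel

lemma Jswap (anticomm : ∀ x y : A, mul x y = - mul y x) (x y z : A) :
    homJacobian mul α y x z = - homJacobian mul α x y z := by
  simp only [homJacobian]
  rw [anticomm y x, anticomm x z, anticomm z y]
  simp only [map_neg, LinearMap.neg_apply]
  abel

lemma Jadd1 (a b y z : A) : homJacobian mul α (a + b) y z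
    = homJacobian mul α a y z + homJacobian mul α b y z := by
  simp only [homJacobian, map_add, LinearMap.add_apply]; abel

lemma Jadd3 (x y a b : A) : homJacobian mul α x y (a + b)
    = homJacobian mul α x y a + homJacobian mul α x y b := by
  simp only [homJacobian, map_add, LinearMap.add_apply]; abel

lemma Jneg3 (x y a : A) : homJacobian mul α x y (-a)
    = - homJacobian mul α x y a := by
  simp only [homJacobian, map_neg, LinearMap.neg_apply]; abel

lemma Jlin (malcev : ∀ x y z : A,
      homJacobian mul α (α x) (α y) (mul x z)
        = mul (homJacobian mul α x y z) (α (α x)))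
    (x y z w : A) :
    homJacobian mul α (α x) (α y) (mul w z)
      + homJacobian mul α (α w) (α y) (mul x z)
    = mul (homJacobian mul α x y z) (α (α w))
      + mul (homJacobian mul α w y z) (α (α x)) := by
  have h := malcev (x + w) y z
  simp only [map_add, LinearMap.add_apply, Jadd1, Jadd3] at h
  linear_combination (norm := module) h - malcev x y z - malcev w y z

end helpers

theorem homMalcev_cyclic_identity {K : Type*} [Field K] [CharZero K] {A : Type*} [AddCommGroup A] [Module K A]
    (mul : A →ₗ[K] A →ₗ[K] A) (α : A →ₗ[K] A)
    (anticomm : ∀ x y : A, mul x y = - mul y x)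
    (multiplicative : ∀ x y : A, α (mul x y) = mul (α x) (α y))
    (malcev : ∀ x y z : A,
      homJacobian mul α (α x) (α y) (mul x z)
        = mul (homJacobian mul α x y z) (α (α x))) :
    ∀ w x y z : A,
      homJacobian mul α (mul w x) (α y) (α z)
        + homJacobian mul α (mul x y) (α z) (α w)
        + homJacobian mul α (mul y z) (α w) (α x)
        + homJacobian mul α (mul z w) (α x) (α y) = 0 := by
  intro w x y z
  have h1 := Jlin mul α malcev y z x w
  have h2 := Jlin mul α malcev z w y x
  have h3 := Jlin mul α malcev w x z y
  have h4 := Jlin mul α malcev x y w z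
  -- turn the second LHS terms into the cyclic forms
  rw [anticomm y x, Jneg3, Jswap mul α anticomm (α z) (α w)] at h1
  rw [anticomm z y, Jneg3, Jswap mul α anticomm (α w) (α x)] at h2
  rw [anticomm w z, Jneg3, Jswap mul α anticomm (α x) (α y)] at h3
  rw [anticomm x w, Jneg3, Jswap mul α anticomm (α y) (α z)] at h4
  -- normalize the Jacobians on the right-hand sides
  rw [← Jcyc mul α x y z,
      Jcyc mul α w z x, Jcyc mul α z x w, Jswap mul α anticomm w x z] at h1
  rw [Jcyc mul α x w y, Jcyc mul α w y x, Jswap mul α anticomm x y w] at h2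
  rw [Jswap mul α anticomm x y z] at h3
  rw [Jcyc mul α z y w, Jcyc mul α y w z, Jswap mul α anticomm z w y] at h4
  simp only [map_neg, LinearMap.neg_apply] at h1 h2 h3 h4
  -- rewrite the goal into cyclic form
  rw [Jcyc mul α (mul w x) (α y) (α z), Jcyc mul α (mul x y) (α z) (α w),
      Jcyc mul α (mul y z) (α w) (α x), Jcyc mul α (mul z w) (α x) (α y)]
  linear_combination (norm := module) ((2:K)⁻¹) • (h1 + h2 + h3 + h4)
end

section
/- Let (A, ·, α) be a Hom-Malcev algebra and define G(w,x,y,z) = J_α(w·x, α(y), α(z)) - α²(x)·J_α(w,y,z) - J_α(x,y,z)·α²(w). Then for all w, x, y, z in A: 2·G(w,x,y,z) - α²(w)·J_α(x,y,z) + α²(x)·J_α(y,z,w) - α²(y)·J_α(z,w,x) + α²(z)·J_α(w,x,y) = J_α(w·x, α(y), α(z)) + J_α(y·z, α(w), α(x)). -/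
theorem homMalcev_G_identity {K : Type*} [Field K] [CharZero K] {A : Type*} [AddCommGroup A] [Module K A]
    (mul : A →ₗ[K] A →ₗ[K] A) (α : A →ₗ[K] A)
    (anticomm : ∀ x y : A, mul x y = - mul y x)
    (multiplicative : ∀ x y : A, α (mul x y) = mul (α x) (α y))
    (malcev : ∀ x y z : A,
      homJacobian mul α (α x) (α y) (mul x z)
        = mul (homJacobian mul α x y z) (α (α x)))
    (G : A → A → A → A → A)
    (hG : ∀ w x y z : A,
      G w x y z = homJacobian mul α (mul w x) (α y) (α z)
          - mul (α (α x)) (homJacobian mul α w y z)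
          - mul (homJacobian mul α x y z) (α (α w))) :
    ∀ w x y z : A,
      2 • G w x y z
        - mul (α (α w)) (homJacobian mul α x y z)
        + mul (α (α x)) (homJacobian mul α y z w)
        - mul (α (α y)) (homJacobian mul α z w x)
        + mul (α (α z)) (homJacobian mul α w x y)
      = homJacobian mul α (mul w x) (α y) (α z)
        + homJacobian mul α (mul y z) (α w) (α x) := by
  intro w x y z
  have Llin : ∀ a b c d : A,
      homJacobian mul α (α a) (α c) (mul b d) + homJacobian mul α (α b) (α c) (mul a d)
        = mul (homJacobian mul α a c d) (α (α b)) + mul (homJacobian mul α b c d) (α (α a)) := by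
    intro a b c d
    have h := malcev (a + b) c d
    have ha := malcev a c d
    have hb := malcev b c d
    simp only [homJacobian, multiplicative, map_add, LinearMap.add_apply] at h ha hb ⊢
    linear_combination (norm := module) h - ha - hb
  have h1 := Llin w x z y
  have h2 := Llin w y z x
  have h3 := Llin w z x y
  have s0 : (mul (mul (mul w y) (α z)) (α (α x))) = -(mul (α (α x)) (mul (mul w y) (α z))) := by rw [anticomm (mul (mul w y) (α z)) (α (α x))] <;> simp
  have s1 : (mul (mul (mul y w) (α z)) (α (α x))) = (mul (mul (α z) (mul w y)) (α (α x))) := by rw [anticomm (mul y w) (α z), anticomm y w] <;> simp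
  have s2 : (mul (mul (mul y z) (α w)) (α (α x))) = -(mul (α (α x)) (mul (mul y z) (α w))) := by rw [anticomm (mul (mul y z) (α w)) (α (α x))] <;> simp
  have s3 : (mul (mul (mul w z) (α y)) (α (α x))) = (mul (α (α x)) (mul (mul z w) (α y))) := by rw [anticomm (mul (mul w z) (α y)) (α (α x)), anticomm w z] <;> simp
  have s4 : (mul (mul (α z) (mul y x)) (α (α w))) = -(mul (α (α w)) (mul (mul x y) (α z))) := by rw [anticomm (mul (α z) (mul y x)) (α (α w)), anticomm (α z) (mul y x), anticomm y x] <;> simp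
  have s5 : (mul (mul (mul y x) (α z)) (α (α w))) = (mul (mul (α z) (mul x y)) (α (α w))) := by rw [anticomm (mul y x) (α z), anticomm y x] <;> simp
  have s6 : (mul (mul (α x) (mul z y)) (α (α w))) = -(mul (α (α w)) (mul (mul y z) (α x))) := by rw [anticomm (mul (α x) (mul z y)) (α (α w)), anticomm (α x) (mul z y), anticomm z y] <;> simp
  have s7 : (mul (mul (mul z y) (α x)) (α (α w))) = (mul (mul (α x) (mul y z)) (α (α w))) := by rw [anticomm (mul z y) (α x), anticomm z y] <;> simp
  have s8 : (mul (mul (mul x z) (α y)) (α (α w))) = (mul (α (α w)) (mul (mul z x) (α y))) := by rw [anticomm (mul (mul x z) (α y)) (α (α w)), anticomm x z] <;> simp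
  have s9 : (mul (mul (mul w z) (α x)) (α (α y))) = (mul (α (α y)) (mul (mul z w) (α x))) := by rw [anticomm (mul (mul w z) (α x)) (α (α y)), anticomm w z] <;> simp
  have s10 : (mul (mul (mul x w) (α z)) (α (α y))) = (mul (α (α y)) (mul (mul w x) (α z))) := by rw [anticomm (mul (mul x w) (α z)) (α (α y)), anticomm x w] <;> simp
  have s11 : (mul (mul (mul z x) (α w)) (α (α y))) = (mul (α (α y)) (mul (mul x z) (α w))) := by rw [anticomm (mul (mul z x) (α w)) (α (α y)), anticomm z x] <;> simp
  have s12 : (mul (mul (mul w x) (α y)) (α (α z))) = -(mul (α (α z)) (mul (mul w x) (α y))) := by rw [anticomm (mul (mul w x) (α y)) (α (α z))] <;> simp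
  have s13 : (mul (mul (mul y x) (α w)) (α (α z))) = (mul (α (α z)) (mul (mul x y) (α w))) := by rw [anticomm (mul (mul y x) (α w)) (α (α z)), anticomm y x] <;> simp
  have s14 : (mul (mul (mul y w) (α x)) (α (α z))) = -(mul (α (α z)) (mul (mul y w) (α x))) := by rw [anticomm (mul (mul y w) (α x)) (α (α z))] <;> simp
  have s15 : (mul (mul (α x) (mul w y)) (α (α z))) = -(mul (mul (mul w y) (α x)) (α (α z))) := by rw [anticomm (α x) (mul w y)] <;> simp
  have s16 : (mul (mul (α w) (α x)) (mul (α z) (α y))) = -(mul (mul (α w) (α x)) (mul (α y) (α z))) := by rw [anticomm (α z) (α y)] <;> simp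
  have s17 : (mul (mul (α w) (α z)) (mul (α y) (α x))) = -(mul (mul (α w) (α z)) (mul (α x) (α y))) := by rw [anticomm (α y) (α x)] <;> simp
  have s18 : (mul (mul (α z) (α x)) (mul (α w) (α y))) = -(mul (mul (α x) (α z)) (mul (α w) (α y))) := by rw [anticomm (α z) (α x)] <;> simp
  simp only [hG, homJacobian, multiplicative, map_add, LinearMap.add_apply] at h1 h2 h3 ⊢
  linear_combination (norm := module) h1 + h2 + h3 - s0 + s1 - s2 + s3 - s4 + s5 - s6 + s7 + s8 + s9 + s10 + s11 + s12 - s13 + s14 - s15 - s16 - s17 - s18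
end

section
/- Let (A, ·, α) be a Hom-Malcev algebra and define G(w,x,y,z) = J_α(w·x, α(y), α(z)) - α²(x)·J_α(w,y,z) - J_α(x,y,z)·α²(w). Then for all w, x, y, z in A: G(w,x,y,z) = 2·[J_α(w·x, α(y), α(z)) + J_α(y·z, α(w), α(x))]. -/
set_option maxHeartbeats 4000000 in
theorem homMalcev_G_eq_two_smul {K : Type*} [Field K] [CharZero K] {A : Type*} [AddCommGroup A] [Module K A]
    (mul : A →ₗ[K] A →ₗ[K] A) (α : A →ₗ[K] A)
    (anticomm : ∀ x y : A, mul x y = - mul y x)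
    (multiplicative : ∀ x y : A, α (mul x y) = mul (α x) (α y))
    (malcev : ∀ x y z : A,
      homJacobian mul α (α x) (α y) (mul x z)
        = mul (homJacobian mul α x y z) (α (α x)))
    (G : A → A → A → A → A)
    (hG : ∀ w x y z : A,
      G w x y z = homJacobian mul α (mul w x) (α y) (α z)
          - mul (α (α x)) (homJacobian mul α w y z)
          - mul (homJacobian mul α x y z) (α (α w))) :
    ∀ w x y z : A,
      G w x y z
        = 2 • (homJacobian mul α (mul w x) (α y) (α z)
            + homJacobian mul α (mul y z) (α w) (α x)) := by
  intro w x y z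
  have f1 : (mul (α (α w)) (mul (α x) (mul y z))) = - (mul (α (α w)) (mul (α x) (mul z y))) := by
    rw [anticomm y z]; try simp
  have f2 : (mul (α (α w)) (mul (α x) (mul y z))) = - (mul (mul (α x) (mul y z)) (α (α w))) := by
    rw [anticomm (α (α w)) (mul (α x) (mul y z))]; try simp
  have f3 : (mul (α (α w)) (mul (α x) (mul z y))) = - (mul (α (α w)) (mul (mul z y) (α x))) := by
    rw [anticomm (α x) (mul z y)]; try simp
  have f4 : (mul (α (α w)) (mul (α x) (mul z y))) = - (mul (mul (α x) (mul z y)) (α (α w))) := by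
    rw [anticomm (α (α w)) (mul (α x) (mul z y))]; try simp
  have f5 : (mul (α (α w)) (mul (α y) (mul x z))) = - (mul (α (α w)) (mul (α y) (mul z x))) := by
    rw [anticomm x z]; try simp
  have f6 : (mul (α (α w)) (mul (α y) (mul x z))) = - (mul (α (α w)) (mul (mul x z) (α y))) := by
    rw [anticomm (α y) (mul x z)]; try simp
  have f7 : (mul (α (α w)) (mul (α y) (mul x z))) = - (mul (mul (α y) (mul x z)) (α (α w))) := by
    rw [anticomm (α (α w)) (mul (α y) (mul x z))]; try simp
  have f8 : (mul (α (α w)) (mul (α y) (mul z x))) = - (mul (α (α w)) (mul (mul z x) (α y))) := by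
    rw [anticomm (α y) (mul z x)]; try simp
  have f9 : (mul (α (α w)) (mul (α y) (mul z x))) = - (mul (mul (α y) (mul z x)) (α (α w))) := by
    rw [anticomm (α (α w)) (mul (α y) (mul z x))]; try simp
  have f10 : (mul (α (α w)) (mul (α z) (mul x y))) = - (mul (α (α w)) (mul (α z) (mul y x))) := by
    rw [anticomm x y]; try simp
  have f11 : (mul (α (α w)) (mul (α z) (mul x y))) = - (mul (α (α w)) (mul (mul x y) (α z))) := by
    rw [anticomm (α z) (mul x y)]; try simp
  have f12 : (mul (α (α w)) (mul (α z) (mul x y))) = - (mul (mul (α z) (mul x y)) (α (α w))) := by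
    rw [anticomm (α (α w)) (mul (α z) (mul x y))]; try simp
  have f13 : (mul (α (α w)) (mul (α z) (mul y x))) = - (mul (α (α w)) (mul (mul y x) (α z))) := by
    rw [anticomm (α z) (mul y x)]; try simp
  have f14 : (mul (α (α w)) (mul (mul x y) (α z))) = - (mul (mul (mul x y) (α z)) (α (α w))) := by
    rw [anticomm (α (α w)) (mul (mul x y) (α z))]; try simp
  have f15 : (mul (α (α w)) (mul (mul x z) (α y))) = - (mul (mul (mul x z) (α y)) (α (α w))) := by
    rw [anticomm (α (α w)) (mul (mul x z) (α y))]; try simp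
  have f16 : (mul (α (α w)) (mul (mul y x) (α z))) = - (mul (mul (mul y x) (α z)) (α (α w))) := by
    rw [anticomm (α (α w)) (mul (mul y x) (α z))]; try simp
  have f17 : (mul (α (α w)) (mul (mul z x) (α y))) = - (mul (mul (mul z x) (α y)) (α (α w))) := by
    rw [anticomm (α (α w)) (mul (mul z x) (α y))]; try simp
  have f18 : (mul (α (α w)) (mul (mul z y) (α x))) = - (mul (mul (mul z y) (α x)) (α (α w))) := by
    rw [anticomm (α (α w)) (mul (mul z y) (α x))]; try simp
  have f19 : (mul (α (α x)) (mul (α w) (mul y z))) = - (mul (α (α x)) (mul (mul y z) (α w))) := by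
    rw [anticomm (α w) (mul y z)]; try simp
  have f20 : (mul (α (α x)) (mul (α w) (mul y z))) = - (mul (mul (α w) (mul y z)) (α (α x))) := by
    rw [anticomm (α (α x)) (mul (α w) (mul y z))]; try simp
  have f21 : (mul (α (α x)) (mul (α y) (mul w z))) = - (mul (α (α x)) (mul (α y) (mul z w))) := by
    rw [anticomm w z]; try simp
  have f22 : (mul (α (α x)) (mul (α y) (mul w z))) = - (mul (α (α x)) (mul (mul w z) (α y))) := by
    rw [anticomm (α y) (mul w z)]; try simp
  have f23 : (mul (α (α x)) (mul (α y) (mul w z))) = - (mul (mul (α y) (mul w z)) (α (α x))) := by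
    rw [anticomm (α (α x)) (mul (α y) (mul w z))]; try simp
  have f24 : (mul (α (α x)) (mul (α y) (mul z w))) = - (mul (α (α x)) (mul (mul z w) (α y))) := by
    rw [anticomm (α y) (mul z w)]; try simp
  have f25 : (mul (α (α x)) (mul (α z) (mul w y))) = - (mul (α (α x)) (mul (α z) (mul y w))) := by
    rw [anticomm w y]; try simp
  have f26 : (mul (α (α x)) (mul (α z) (mul w y))) = - (mul (α (α x)) (mul (mul w y) (α z))) := by
    rw [anticomm (α z) (mul w y)]; try simp
  have f27 : (mul (α (α x)) (mul (α z) (mul w y))) = - (mul (mul (α z) (mul w y)) (α (α x))) := by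
    rw [anticomm (α (α x)) (mul (α z) (mul w y))]; try simp
  have f28 : (mul (α (α x)) (mul (α z) (mul y w))) = - (mul (α (α x)) (mul (mul y w) (α z))) := by
    rw [anticomm (α z) (mul y w)]; try simp
  have f29 : (mul (α (α x)) (mul (mul w y) (α z))) = - (mul (mul (mul w y) (α z)) (α (α x))) := by
    rw [anticomm (α (α x)) (mul (mul w y) (α z))]; try simp
  have f30 : (mul (α (α x)) (mul (mul w z) (α y))) = - (mul (mul (mul w z) (α y)) (α (α x))) := by
    rw [anticomm (α (α x)) (mul (mul w z) (α y))]; try simp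
  have f31 : (mul (α (α x)) (mul (mul y w) (α z))) = - (mul (mul (mul y w) (α z)) (α (α x))) := by
    rw [anticomm (α (α x)) (mul (mul y w) (α z))]; try simp
  have f32 : (mul (α (α x)) (mul (mul y z) (α w))) = - (mul (mul (mul y z) (α w)) (α (α x))) := by
    rw [anticomm (α (α x)) (mul (mul y z) (α w))]; try simp
  have f33 : (mul (α (α x)) (mul (mul z w) (α y))) = - (mul (mul (mul z w) (α y)) (α (α x))) := by
    rw [anticomm (α (α x)) (mul (mul z w) (α y))]; try simp
  have f34 : (mul (α (α y)) (mul (α w) (mul x z))) = - (mul (α (α y)) (mul (mul x z) (α w))) := by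
    rw [anticomm (α w) (mul x z)]; try simp
  have f35 : (mul (α (α y)) (mul (α w) (mul x z))) = - (mul (mul (α w) (mul x z)) (α (α y))) := by
    rw [anticomm (α (α y)) (mul (α w) (mul x z))]; try simp
  have f36 : (mul (α (α y)) (mul (α z) (mul w x))) = - (mul (α (α y)) (mul (α z) (mul x w))) := by
    rw [anticomm w x]; try simp
  have f37 : (mul (α (α y)) (mul (α z) (mul w x))) = - (mul (α (α y)) (mul (mul w x) (α z))) := by
    rw [anticomm (α z) (mul w x)]; try simp
  have f38 : (mul (α (α y)) (mul (α z) (mul w x))) = - (mul (mul (α z) (mul w x)) (α (α y))) := by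
    rw [anticomm (α (α y)) (mul (α z) (mul w x))]; try simp
  have f39 : (mul (α (α y)) (mul (α z) (mul x w))) = - (mul (α (α y)) (mul (mul x w) (α z))) := by
    rw [anticomm (α z) (mul x w)]; try simp
  have f40 : (mul (α (α y)) (mul (mul w x) (α z))) = - (mul (mul (mul w x) (α z)) (α (α y))) := by
    rw [anticomm (α (α y)) (mul (mul w x) (α z))]; try simp
  have f41 : (mul (α (α y)) (mul (mul x w) (α z))) = - (mul (mul (mul x w) (α z)) (α (α y))) := by
    rw [anticomm (α (α y)) (mul (mul x w) (α z))]; try simp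
  have f42 : (mul (α (α y)) (mul (mul x z) (α w))) = - (mul (mul (mul x z) (α w)) (α (α y))) := by
    rw [anticomm (α (α y)) (mul (mul x z) (α w))]; try simp
  have f43 : (mul (α (α z)) (mul (α w) (mul x y))) = - (mul (α (α z)) (mul (α w) (mul y x))) := by
    rw [anticomm x y]; try simp
  have f44 : (mul (α (α z)) (mul (α w) (mul x y))) = - (mul (α (α z)) (mul (mul x y) (α w))) := by
    rw [anticomm (α w) (mul x y)]; try simp
  have f45 : (mul (α (α z)) (mul (α w) (mul y x))) = - (mul (α (α z)) (mul (mul y x) (α w))) := by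
    rw [anticomm (α w) (mul y x)]; try simp
  have f46 : (mul (α (α z)) (mul (α x) (mul w y))) = - (mul (α (α z)) (mul (α x) (mul y w))) := by
    rw [anticomm w y]; try simp
  have f47 : (mul (α (α z)) (mul (α x) (mul w y))) = - (mul (mul (α x) (mul w y)) (α (α z))) := by
    rw [anticomm (α (α z)) (mul (α x) (mul w y))]; try simp
  have f48 : (mul (α (α z)) (mul (α x) (mul y w))) = - (mul (α (α z)) (mul (mul y w) (α x))) := by
    rw [anticomm (α x) (mul y w)]; try simp
  have f49 : (mul (α (α z)) (mul (α y) (mul w x))) = - (mul (α (α z)) (mul (α y) (mul x w))) := by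
    rw [anticomm w x]; try simp
  have f50 : (mul (α (α z)) (mul (α y) (mul w x))) = - (mul (mul (α y) (mul w x)) (α (α z))) := by
    rw [anticomm (α (α z)) (mul (α y) (mul w x))]; try simp
  have f51 : (mul (α (α z)) (mul (α y) (mul x w))) = - (mul (α (α z)) (mul (mul x w) (α y))) := by
    rw [anticomm (α y) (mul x w)]; try simp
  have f52 : (mul (α (α z)) (mul (mul x w) (α y))) = - (mul (mul (mul x w) (α y)) (α (α z))) := by
    rw [anticomm (α (α z)) (mul (mul x w) (α y))]; try simp
  have f53 : (mul (α (α z)) (mul (mul x y) (α w))) = - (mul (mul (mul x y) (α w)) (α (α z))) := by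
    rw [anticomm (α (α z)) (mul (mul x y) (α w))]; try simp
  have f54 : (mul (α (α z)) (mul (mul y w) (α x))) = - (mul (mul (mul y w) (α x)) (α (α z))) := by
    rw [anticomm (α (α z)) (mul (mul y w) (α x))]; try simp
  have f55 : (mul (α (α z)) (mul (mul y x) (α w))) = - (mul (mul (mul y x) (α w)) (α (α z))) := by
    rw [anticomm (α (α z)) (mul (mul y x) (α w))]; try simp
  have f56 : (mul (mul (α w) (α x)) (mul (α y) (α z))) = - (mul (mul (α w) (α x)) (mul (α z) (α y))) := by
    rw [anticomm (α y) (α z)]; try simp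
  have f57 : (mul (mul (α w) (α x)) (mul (α y) (α z))) = - (mul (mul (α x) (α w)) (mul (α y) (α z))) := by
    rw [anticomm (α w) (α x)]; try simp
  have f58 : (mul (mul (α w) (α x)) (mul (α y) (α z))) = - (mul (mul (α y) (α z)) (mul (α w) (α x))) := by
    rw [anticomm (mul (α w) (α x)) (mul (α y) (α z))]; try simp
  have f59 : (mul (mul (α w) (α x)) (mul (α z) (α y))) = - (mul (mul (α z) (α y)) (mul (α w) (α x))) := by
    rw [anticomm (mul (α w) (α x)) (mul (α z) (α y))]; try simp
  have f60 : (mul (mul (α w) (α y)) (mul (α x) (α z))) = - (mul (mul (α w) (α y)) (mul (α z) (α x))) := by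
    rw [anticomm (α x) (α z)]; try simp
  have f61 : (mul (mul (α w) (α y)) (mul (α x) (α z))) = - (mul (mul (α x) (α z)) (mul (α w) (α y))) := by
    rw [anticomm (mul (α w) (α y)) (mul (α x) (α z))]; try simp
  have f62 : (mul (mul (α w) (α y)) (mul (α x) (α z))) = - (mul (mul (α y) (α w)) (mul (α x) (α z))) := by
    rw [anticomm (α w) (α y)]; try simp
  have f63 : (mul (mul (α w) (α y)) (mul (α z) (α x))) = - (mul (mul (α z) (α x)) (mul (α w) (α y))) := by
    rw [anticomm (mul (α w) (α y)) (mul (α z) (α x))]; try simp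
  have f64 : (mul (mul (α w) (α z)) (mul (α x) (α y))) = - (mul (mul (α x) (α y)) (mul (α w) (α z))) := by
    rw [anticomm (mul (α w) (α z)) (mul (α x) (α y))]; try simp
  rw [hG w x y z]
  linear_combination (norm := skip)
    (-1 : K) • malcev w x y +
      ((-1 : K)/2) • malcev w y x +
      ((-1 : K)/2) • malcev w y z +
      ((-1 : K)/2) • malcev w z y +
      ((-1 : K)/2) • malcev x w z +
      ((-1 : K)/2) • malcev x y z +
      ((-1 : K)/2) • malcev x z y +
      ((-1 : K)/2) • malcev y w z +
      (-1 : K) • malcev z x y +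
      ((-1 : K)/2) • malcev z y x +
      ((1 : K)/2) • malcev (w+x) y z +
      ((1 : K)/2) • malcev (w+x) z y +
      (1 : K) • malcev (w+z) x y +
      ((1 : K)/2) • malcev (w+z) y x +
      ((1 : K)/2) • malcev (x+y) w z +
      (2 : K) • f1 +
      (-2 : K) • f2 +
      (-1 : K) • f3 +
      (-1 : K) • f4 +
      (1 : K) • f5 +
      ((-1 : K)/2) • f6 +
      ((-1 : K)/2) • f7 +
      ((-1 : K)/2) • f8 +
      ((-1 : K)/2) • f9 +
      (1 : K) • f10 +
      ((-1 : K)/2) • f11 +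
      ((-1 : K)/2) • f12 +
      (-1 : K) • f13 +
      ((1 : K)/2) • f14 +
      ((1 : K)/2) • f15 +
      (1 : K) • f16 +
      ((1 : K)/2) • f17 +
      (1 : K) • f18 +
      ((1 : K)/2) • f19 +
      ((-1 : K)/2) • f20 +
      ((3 : K)/2) • f21 +
      (-1 : K) • f22 +
      ((-1 : K)/2) • f23 +
      ((-3 : K)/2) • f24 +
      (1 : K) • f25 +
      ((-1 : K)/2) • f26 +
      ((-1 : K)/2) • f27 +
      (-1 : K) • f28 +
      ((-1 : K)/2) • f29 +
      (1 : K) • f30 +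
      (1 : K) • f31 +
      ((-3 : K)/2) • f32 +
      ((1 : K)/2) • f33 +
      ((1 : K)/2) • f34 +
      ((-1 : K)/2) • f35 +
      ((1 : K)/2) • f36 +
      ((1 : K)/2) • f37 +
      (-1 : K) • f38 +
      ((-1 : K)/2) • f39 +
      ((-1 : K)/2) • f40 +
      ((1 : K)/2) • f41 +
      ((-1 : K)/2) • f42 +
      ((1 : K)/2) • f43 +
      ((-1 : K)/2) • f44 +
      ((-1 : K)/2) • f45 +
      (1 : K) • f46 +
      (-1 : K) • f47 +
      (-1 : K) • f48 +
      ((1 : K)/2) • f49 +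
      ((-1 : K)/2) • f50 +
      ((-1 : K)/2) • f51 +
      ((1 : K)/2) • f52 +
      ((1 : K)/2) • f53 +
      (1 : K) • f54 +
      ((1 : K)/2) • f55 +
      ((-1 : K)/2) • f56 +
      ((-1 : K)/2) • f57 +
      (-1 : K) • f58 +
      ((-1 : K)/2) • f59 +
      ((1 : K)/2) • f60 +
      ((-1 : K)/2) • f61 +
      ((-1 : K)/2) • f62 +
      (-1 : K) • f63 +
      ((-1 : K)/2) • f64
  simp only [homJacobian, map_add, LinearMap.add_apply, multiplicative]
  module
end

section
/- Let (A, ·, α) be a Hom-Malcev algebra. Then for all w, x, y, z in A the identity J_α(w·x, α(y), α(z)) = J_α(w,y,z)·α²(x) + α²(w)·J_α(x,y,z) - 2·J_α(y·z, α(w), α(x)) holds. -/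
theorem homMalcev_main_identity {K : Type*} [Field K] [CharZero K] {A : Type*} [AddCommGroup A] [Module K A]
    (mul : A →ₗ[K] A →ₗ[K] A) (α : A →ₗ[K] A)
    (anticomm : ∀ x y : A, mul x y = - mul y x)
    (multiplicative : ∀ x y : A, α (mul x y) = mul (α x) (α y))
    (malcev : ∀ x y z : A,
      homJacobian mul α (α x) (α y) (mul x z)
        = mul (homJacobian mul α x y z) (α (α x))) :
    ∀ w x y z : A,
      homJacobian mul α (mul w x) (α y) (α z)
        = mul (homJacobian mul α w y z) (α (α x))
          + mul (α (α w)) (homJacobian mul α x y z)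
          - 2 • homJacobian mul α (mul y z) (α w) (α x) := by
  have key : ∀ a b c d : A,
      homJacobian mul α (α a) (α c) (mul b d) + homJacobian mul α (α b) (α c) (mul a d)
        = mul (homJacobian mul α a c d) (α (α b)) + mul (homJacobian mul α b c d) (α (α a)) := by
    intro a b c d
    have h := malcev (a + b) c d
    have h1 := malcev a c d
    have h2 := malcev b c d
    simp only [homJacobian, map_add, LinearMap.add_apply, multiplicative] at h h1 h2 ⊢
    linear_combination (norm := module) h - h1 - h2
  intro w x y z
  have k1 := key w x y z
  have k2 := key w y x z
  have k3 := key w y z x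
  have k4 := key w z x y
  simp only [homJacobian, map_add, LinearMap.add_apply, multiplicative,
    map_neg, LinearMap.neg_apply,
    anticomm (mul (α x) (α y)) (mul (α w) (α z)),
    anticomm (mul (α x) (α z)) (mul (α w) (α y)),
    anticomm (mul (α y) (α z)) (mul (α w) (α x)),
    anticomm (α (α w)) (mul (mul x y) (α z)),
    anticomm (α (α w)) (mul (mul x z) (α y)),
    anticomm (α (α w)) (mul (mul y z) (α x)),
    anticomm x w,
    anticomm (α x) (mul w y),
    anticomm (α x) (mul w z),
    anticomm (α x) (mul y z),
    anticomm y w,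
    anticomm y x,
    anticomm (α y) (mul w z),
    anticomm (α y) (mul x z),
    anticomm (α y) (α x),
    anticomm z w,
    anticomm z x,
    anticomm z y,
    anticomm (α z) (mul w x),
    anticomm (α z) (mul x y),
    anticomm (α z) (α x),
    anticomm (α z) (α y)] at k1 k2 k3 k4 ⊢
  linear_combination (norm := module)
    ((2:K)⁻¹ : K) • k1 + k2 + ((2:K)⁻¹ : K) • k3 - ((2:K)⁻¹ : K) • k4
end

section
/- Let (A, ·, α) be an anticommutative multiplicative Hom-algebra satisfying, for all w, x, y, z in A, the identity J_α(w·x, α(y), α(z)) = J_α(w,y,z)·α²(x) + α²(w)·J_α(x,y,z) - 2·J_α(y·z, α(w), α(x)). Then (A, ·, α) satisfies the Hom-Malcev identity J_α(α(x), α(y), x·z) = J_α(x,y,z)·α²(x) for all x, y, z in A. -/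
theorem homMalcev_of_main_identity {K : Type*} [Field K] [CharZero K] {A : Type*} [AddCommGroup A] [Module K A]
    (mul : A →ₗ[K] A →ₗ[K] A) (α : A →ₗ[K] A)
    (anticomm : ∀ x y : A, mul x y = - mul y x)
    (multiplicative : ∀ x y : A, α (mul x y) = mul (α x) (α y))
    (h : ∀ w x y z : A,
      homJacobian mul α (mul w x) (α y) (α z)
        = mul (homJacobian mul α w y z) (α (α x))
          + mul (α (α w)) (homJacobian mul α x y z)
          - 2 • homJacobian mul α (mul y z) (α w) (α x)) :
    ∀ x y z : A,
      homJacobian mul α (α x) (α y) (mul x z)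
        = mul (homJacobian mul α x y z) (α (α x)) := by
  intro x y z
  have cyc : ∀ a b c : A, homJacobian mul α a b c = homJacobian mul α b c a := by
    intro a b c; simp only [homJacobian]; abel
  have swap : ∀ a b c : A, homJacobian mul α b a c = - homJacobian mul α a b c := by
    intro a b c
    simp only [homJacobian]
    rw [anticomm a b, anticomm b c, anticomm c a]
    simp only [map_neg, LinearMap.neg_apply]
    abel
  have self : ∀ a b : A, homJacobian mul α a a b = 0 := by
    intro a b
    have hs := swap a a b
    have h2 : (2 : K) • homJacobian mul α a a b = 0 := by
      rw [two_smul]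
      nth_rewrite 1 [hs]
      abel
    exact (smul_eq_zero.mp h2).resolve_left (by norm_num)
  set M := homJacobian mul α x y z with hM
  set c := α (α x) with hc
  set P := homJacobian mul α (mul x y) (α x) (α z) with hP
  set Q := homJacobian mul α (mul x z) (α x) (α y) with hQ
  have h1 := h x y x z
  have h2 := h x z x y
  rw [self x z, swap x y z, ← hM] at h1
  rw [self x y, cyc z x y, ← hM] at h2
  simp only [map_zero, LinearMap.zero_apply, map_neg, zero_add, ← hc, ← hP, ← hQ] at h1 h2
  -- h1 : P = - mul c M - 2 • Q
  -- h2 : Q = mul c M - 2 • P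
  rw [h1] at h2
  -- h2 : Q = mul c M - 2 • (- mul c M - 2 • Q)
  have e4 : (3:ℕ) • Q + (3:ℕ) • mul c M
      = -(Q - (mul c M - 2 • (-(mul c M) - 2 • Q))) := by abel
  rw [sub_eq_zero_of_eq h2, neg_zero] at e4
  have e5 : (3:ℕ) • Q = (3:ℕ) • (-(mul c M)) := by
    rw [smul_neg]
    exact eq_neg_of_add_eq_zero_left e4
  rw [← Nat.cast_smul_eq_nsmul K, ← Nat.cast_smul_eq_nsmul K] at e5
  have e6 : Q = -(mul c M) :=
    smul_right_injective A (by norm_num : ((3:ℕ):K) ≠ 0) e5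
  rw [cyc, cyc, ← hQ, e6, anticomm M c]
end

section
/- Let (A, ·, α) be an anticommutative multiplicative Hom-algebra. Then the following are equivalent: (i) the Hom-Malcev identity J_α(α(x), α(y), x·z) = J_α(x,y,z)·α²(x) holds for all x, y, z in A; (ii) the identity J_α(w·x, α(y), α(z)) = J_α(w,y,z)·α²(x) + α²(w)·J_α(x,y,z) - 2·J_α(y·z, α(w), α(x)) holds for all w, x, y, z in A. -/
set_option maxHeartbeats 2000000

theorem homMalcev_iff_main_identity {K : Type*} [Field K] [CharZero K] {A : Type*} [AddCommGroup A] [Module K A]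
    (mul : A →ₗ[K] A →ₗ[K] A) (α : A →ₗ[K] A)
    (anticomm : ∀ x y : A, mul x y = - mul y x)
    (multiplicative : ∀ x y : A, α (mul x y) = mul (α x) (α y)) :
    (∀ x y z : A,
      homJacobian mul α (α x) (α y) (mul x z)
        = mul (homJacobian mul α x y z) (α (α x)))
    ↔ (∀ w x y z : A,
      homJacobian mul α (mul w x) (α y) (α z)
        = mul (homJacobian mul α w y z) (α (α x))
          + mul (α (α w)) (homJacobian mul α x y z)
          - 2 • homJacobian mul α (mul y z) (α w) (α x)) := by
  have swapL : ∀ a b c : A, mul (mul a b) c = - mul (mul b a) c := by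
    intro a b c; rw [anticomm a b]; simp
  have swapR : ∀ a b c : A, mul a (mul b c) = - mul a (mul c b) := by
    intro a b c; rw [anticomm b c]; simp
  have swapLL : ∀ a b c d : A, mul (mul (mul a b) c) d = - mul (mul (mul b a) c) d := by
    intro a b c d; rw [anticomm a b]; simp
  constructor
  · intro h w x y z
    have Lh : ∀ a b c d : A,
        homJacobian mul α (α a) (α c) (mul b d) + homJacobian mul α (α b) (α c) (mul a d)
          = mul (homJacobian mul α a c d) (α (α b))
            + mul (homJacobian mul α b c d) (α (α a)) := by
      intro a b c d
      have h1 := h (a + b) c d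
      have h2 := h a c d
      have h3 := h b c d
      simp only [homJacobian, map_add, LinearMap.add_apply] at h1 h2 h3 ⊢
      linear_combination (norm := module) h1 - h2 - h3
    have e1 := Lh w x y z
    have e2 := Lh w y x z
    have e3 := Lh w y z x
    have e4 := Lh w z x y
    simp only [homJacobian, multiplicative, map_add, LinearMap.add_apply] at e1 e2 e3 e4 ⊢
    linear_combination (norm := module)
      ((1 : K)/2) • (e1) +
      (1 : K) • (e2) +
      ((1 : K)/2) • (e3) +
      ((-1 : K)/2) • (e4) +
      ((1 : K)/2) • (anticomm (mul (α y) (α z)) (mul (α w) (α x))) +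
      ((1 : K)/2) • (swapL (α z) (mul w x) (α (α y))) +
      ((-1 : K)/2) • (swapLL z w (α y) (α (α x))) -
      (1 : K) • (anticomm (α (α w)) (mul (mul x y) (α z))) -
      (1 : K) • (anticomm (α (α w)) (mul (mul y z) (α x))) -
      (1 : K) • (anticomm (α (α w)) (mul (mul z x) (α y))) +
      (1 : K) • (swapLL z x (α y) (α (α w))) +
      (1 : K) • (swapL (α x) (mul y z) (α (α w))) +
      ((-1 : K)/2) • (swapL (α y) (mul x z) (α (α w))) +
      ((-1 : K)/2) • (anticomm (mul (α x) (α y)) (mul (α w) (α z))) +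
      ((-1 : K)/2) • (swapL (α y) (mul w z) (α (α x))) +
      ((1 : K)/2) • (swapLL z x (α y) (α (α w))) -
      (1 : K) • (anticomm (mul (α y) (α x)) (mul (α w) (α z))) +
      (1 : K) • (swapR (mul (α w) (α z)) (α y) (α x)) -
      (1 : K) • (swapL (α x) (mul w z) (α (α y))) +
      (1 : K) • (swapLL z w (α x) (α (α y))) +
      (1 : K) • (swapLL y x (α z) (α (α w))) +
      (1 : K) • (swapLL z y (α x) (α (α w))) +
      ((-1 : K)/2) • (swapR (mul (α w) (α z)) (α y) (α x)) +
      ((-1 : K)/2) • (swapL (α z) (mul y x) (α (α w))) +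
      ((1 : K)/2) • (swapLL y x (α z) (α (α w))) +
      ((-1 : K)/2) • (swapLL y x (α w) (α (α z))) +
      ((1 : K)/2) • (swapLL z x (α w) (α (α y))) +
      ((1 : K)/2) • (swapLL x w (α z) (α (α y))) +
      ((1 : K)/2) • (swapR (mul (α w) (α x)) (α z) (α y)) +
      ((1 : K)/2) • (swapL (α x) (mul z y) (α (α w))) +
      ((-1 : K)/2) • (swapLL z y (α x) (α (α w))) +
      ((1 : K)/2) • (swapLL z y (α w) (α (α x))) +
      ((1 : K)/2) • (anticomm (mul (α z) (α x)) (mul (α w) (α y))) +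
      ((-1 : K)/2) • (swapR (mul (α w) (α y)) (α z) (α x)) +
      ((1 : K)/2) • (swapL (α x) (mul w y) (α (α z))) +
      ((-1 : K)/2) • (swapLL y w (α x) (α (α z)))
  · intro h x' y' z'
    have Lh : ∀ w x y z : A,
        homJacobian mul α (α w) (α y) (mul x z) + homJacobian mul α (α x) (α y) (mul w z)
          = mul (homJacobian mul α w y z) (α (α x))
            + mul (homJacobian mul α x y z) (α (α w)) := by
      intro w x y z
      have e1 := h w y x z
      have e2 := h w z x y
      have e3 := h x y w z
      have e4 := h x z w y
      simp only [homJacobian, multiplicative, map_add, LinearMap.add_apply] at e1 e2 e3 e4 ⊢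
      linear_combination (norm := module)
        ((2 : K)/3) • (e1) +
      ((-1 : K)/3) • (e2) +
      ((2 : K)/3) • (e3) +
      ((-1 : K)/3) • (e4) -
      (1 : K) • (swapLL z w (α y) (α (α x))) -
      (1 : K) • (swapLL z x (α y) (α (α w))) +
      ((2 : K)/3) • (swapLL z w (α x) (α (α y))) +
      ((2 : K)/3) • (anticomm (α (α w)) (mul (mul y x) (α z))) +
      ((-2 : K)/3) • (swapLL y x (α z) (α (α w))) +
      ((2 : K)/3) • (anticomm (α (α w)) (mul (mul x z) (α y))) +
      ((2 : K)/3) • (anticomm (α (α w)) (mul (mul z y) (α x))) +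
      ((-2 : K)/3) • (swapLL z y (α x) (α (α w))) +
      ((-1 : K)/3) • (swapLL y w (α x) (α (α z))) +
      ((-1 : K)/3) • (anticomm (α (α w)) (mul (mul z x) (α y))) +
      ((1 : K)/3) • (swapLL z x (α y) (α (α w))) +
      ((-1 : K)/3) • (anticomm (α (α w)) (mul (mul x y) (α z))) +
      ((-1 : K)/3) • (anticomm (α (α w)) (mul (mul y z) (α x))) +
      ((2 : K)/3) • (swapLL x w (α z) (α (α y))) +
      ((2 : K)/3) • (swapLL z x (α w) (α (α y))) +
      ((2 : K)/3) • (anticomm (α (α x)) (mul (mul y w) (α z))) +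
      ((-2 : K)/3) • (swapLL y w (α z) (α (α x))) +
      ((2 : K)/3) • (anticomm (α (α x)) (mul (mul w z) (α y))) +
      ((2 : K)/3) • (anticomm (α (α x)) (mul (mul z y) (α w))) +
      ((-2 : K)/3) • (swapLL z y (α w) (α (α x))) +
      ((-1 : K)/3) • (swapLL x w (α y) (α (α z))) +
      ((-1 : K)/3) • (swapLL y x (α w) (α (α z))) +
      ((-1 : K)/3) • (anticomm (α (α x)) (mul (mul z w) (α y))) +
      ((1 : K)/3) • (swapLL z w (α y) (α (α x))) +
      ((-1 : K)/3) • (anticomm (α (α x)) (mul (mul w y) (α z))) +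
      ((-1 : K)/3) • (anticomm (α (α x)) (mul (mul y z) (α w)))
    have e := Lh x' x' y' z'
    have e2 : (2 : K) • homJacobian mul α (α x') (α y') (mul x' z')
        = (2 : K) • mul (homJacobian mul α x' y' z') (α (α x')) := by
      linear_combination (norm := module) e
    exact smul_right_injective A (two_ne_zero) e2
end
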